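/- For any A ∈ ℝ^d, r > 0, and s > d−1 (with d ≥ 2), the surface integral over the unit sphere satisfies ∫_{S^{d-1}} ⟨A + rω⟩^{-s} dω ≲ ⟨|A| − r⟩^{d−1−s} ⟨r⟩^{1−d}, where ⟨x⟩ = (1 + |x|²)^{1/2} and the implicit constant depends only on d and s. -/

import Mathlib

/-!
On the sphere `⟨A + rω⟩ ≥ ⟨|A| - r⟩ =: M`, and `⟨A + rω⟩ < t` forces `ω` into the ball of radius
`t / r` around `-A / r`. A spherical cap of radius `δ` has `(d-1)`-dimensional Hausdorff measure
`≲ δ^(d-1)`: near a point `v` of the sphere it is the image of a flat `(d-1)`-ball in `v^⊥` under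
the `2`-Lipschitz graph map `y ↦ y + √(1 - |y|²) v`, and large caps are controlled by the (finite)
measure of the whole sphere. Hence `|{ω : ⟨A + rω⟩ < t}| ≲ (t / ⟨r⟩)^(d-1)`, and summing
`⟨A + rω⟩^(-s)` over the dyadic shells `2ᵏ M ≤ ⟨A + rω⟩ < 2ᵏ⁺¹ M` gives a geometric series,
convergent because `s > d - 1`, with sum `≲ M^(d-1-s) ⟨r⟩^(1-d)`.
-/

open MeasureTheory Complex SchwartzMap

noncomputable section

/-- ℝ^d as a Euclidean space. -/
abbrev Rd (d : ℕ) := EuclideanSpace ℝ (Fin d)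

/-- Fourier transform, convention  f̂(ξ) = (2π)^{-d/2} ∫ e^{-ix·ξ} f(x) dx. -/
def FT (d : ℕ) (f : Rd d → ℂ) (ξ : Rd d) : ℂ :=
  (((2 * Real.pi) ^ (-(d : ℝ) / 2) : ℝ) : ℂ) *
    ∫ x : Rd d, Complex.exp (-Complex.I * ((inner ℝ x ξ : ℝ) : ℂ)) * f x

/-- Inverse Fourier transform, convention ǧ(x) = (2π)^{-d/2} ∫ e^{ix·ξ} g(ξ) dξ. -/
def IFT (d : ℕ) (g : Rd d → ℂ) (x : Rd d) : ℂ :=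
  (((2 * Real.pi) ^ (-(d : ℝ) / 2) : ℝ) : ℂ) *
    ∫ ξ : Rd d, Complex.exp (Complex.I * ((inner ℝ x ξ : ℝ) : ℂ)) * g ξ

/-- The free Schrödinger propagator e^{isΔ}, defined as the Fourier multiplier e^{-is|ξ|²}. -/
def schrod (d : ℕ) (s : ℝ) (f : Rd d → ℂ) : Rd d → ℂ :=
  IFT d fun ξ => Complex.exp (-Complex.I * (s : ℂ) * ((‖ξ‖ ^ 2 : ℝ) : ℂ)) * FT d f ξ

/-- The (CR) Hamiltonian  H(g) = ((2π)^{d-1}/2) ∫∫ |e^{isΔ} ǧ|⁴ dx ds. -/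
def Ham (d : ℕ) (g : Rd d → ℂ) : ℝ :=
  (2 * Real.pi) ^ ((d : ℝ) - 1) / 2 * ∫ s : ℝ, ∫ x : Rd d, ‖schrod d s (IFT d g) x‖ ^ 4

/-- The (CR) trilinear operator
T(f₁,f₂,f₃) = (2π)^{d-1} 𝓕 ∫ e^{-isΔ}( e^{isΔ}f̌₁ ⬝ conj(e^{isΔ}f̌₂) ⬝ e^{isΔ}f̌₃ ) ds. -/
def Tcr (d : ℕ) (f₁ f₂ f₃ : Rd d → ℂ) (ξ : Rd d) : ℂ :=
  (((2 * Real.pi) ^ ((d : ℝ) - 1) : ℝ) : ℂ) *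
    FT d (fun x => ∫ s : ℝ,
      schrod d (-s) (fun y =>
        schrod d s (IFT d f₁) y * (starRingEnd ℂ) (schrod d s (IFT d f₂) y) *
          schrod d s (IFT d f₃) y) x) ξ

/-- Japanese bracket ⟨t⟩ = (1+t²)^{1/2}. -/
def jb (t : ℝ) : ℝ := Real.sqrt (1 + t ^ 2)

open Metric Set Module
open scoped ENNReal NNReal InnerProductSpace

lemma one_le_jb (t : ℝ) : 1 ≤ jb t :=
  Real.one_le_sqrt.2 (by nlinarith [sq_nonneg t])

lemma jb_pos (t : ℝ) : 0 < jb t := one_pos.trans_le (one_le_jb t)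

lemma abs_le_jb (t : ℝ) : |t| ≤ jb t := by
  rw [← Real.sqrt_sq_eq_abs]
  exact Real.sqrt_le_sqrt (by linarith)

lemma jb_le_jb {x y : ℝ} (h : |x| ≤ |y|) : jb x ≤ jb y :=
  Real.sqrt_le_sqrt (by nlinarith [sq_abs x, sq_abs y, abs_nonneg x])

lemma jb_le_one_add_abs (t : ℝ) : jb t ≤ 1 + |t| := by
  rw [jb, Real.sqrt_le_left (by positivity)]
  nlinarith [sq_abs t, abs_nonneg t]

@[fun_prop]
lemma continuous_jb : Continuous jb := by
  unfold jb; fun_prop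

section Dyadic

variable {α : Type*} [MeasurableSpace α] {μ : Measure α}

theorem lintegral_rpow_neg_le_of_measure_lt_le {S : Set α} {g : α → ℝ} {M p s : ℝ} {K : ℝ≥0∞}
    (hS : MeasurableSet S) (hg : Measurable g) (hM : 0 < M) (hgM : ∀ x ∈ S, M ≤ g x)
    (hs : 0 ≤ s) (hps : p < s)
    (hK : ∀ t > 0, μ (S ∩ {x | g x < t}) ≤ K * ENNReal.ofReal (t ^ p)) :
    ∫⁻ x in S, ENNReal.ofReal (g x ^ (-s)) ∂μ
      ≤ K * ENNReal.ofReal (2 ^ p / (1 - 2 ^ (p - s)) * M ^ (p - s)) := by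
  set shell : ℕ → Set α := fun k => S ∩ {x | 2 ^ k * M ≤ g x ∧ g x < 2 ^ (k + 1) * M}
  have hcover : S ⊆ ⋃ k, shell k := by
    intro x hx
    obtain ⟨k, hk, hk'⟩ := exists_nat_pow_near ((one_le_div hM).2 (hgM x hx)) one_lt_two
    exact mem_iUnion.2 ⟨k, hx, (le_div_iff₀ hM).1 hk, (div_lt_iff₀ hM).1 hk'⟩
  have hq : (2 : ℝ) ^ (p - s) < 1 := Real.rpow_lt_one_of_one_lt_of_neg one_lt_two (by linarith)
  have hshell (k : ℕ) : ∫⁻ x in shell k, ENNReal.ofReal (g x ^ (-s)) ∂μ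
      ≤ K * ENNReal.ofReal (2 ^ p * M ^ (p - s)) * ENNReal.ofReal (2 ^ (p - s)) ^ k := by
    have hmeas : MeasurableSet (shell k) :=
      hS.inter ((measurableSet_le measurable_const hg).inter (measurableSet_lt hg measurable_const))
    have hsub : shell k ⊆ S ∩ {x | g x < 2 ^ (k + 1) * M} := fun x hx => ⟨hx.1, hx.2.2⟩
    have hpow : (2 ^ k * M) ^ (-s) * (2 ^ (k + 1) * M) ^ p
        = 2 ^ p * M ^ (p - s) * (2 ^ (p - s)) ^ k := by
      rw [Real.mul_rpow (by positivity) hM.le, Real.mul_rpow (by positivity) hM.le,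
        ← Real.rpow_pow_comm zero_le_two, ← Real.rpow_pow_comm zero_le_two, pow_succ,
        Real.rpow_sub two_pos, Real.rpow_sub hM, Real.rpow_neg zero_le_two, Real.rpow_neg hM.le,
        div_eq_mul_inv, div_eq_mul_inv, mul_pow, inv_pow]
      ring
    calc ∫⁻ x in shell k, ENNReal.ofReal (g x ^ (-s)) ∂μ
        ≤ ∫⁻ _ in shell k, ENNReal.ofReal ((2 ^ k * M) ^ (-s)) ∂μ :=
          setLIntegral_mono' hmeas fun x hx => ENNReal.ofReal_le_ofReal <|
            Real.rpow_le_rpow_of_nonpos (by positivity) hx.2.1 (neg_nonpos.2 hs)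
      _ = ENNReal.ofReal ((2 ^ k * M) ^ (-s)) * μ (shell k) := setLIntegral_const _ _
      _ ≤ ENNReal.ofReal ((2 ^ k * M) ^ (-s)) * (K * ENNReal.ofReal ((2 ^ (k + 1) * M) ^ p)) := by
          gcongr
          exact (measure_mono hsub).trans (hK _ (by positivity))
      _ = K * ENNReal.ofReal (2 ^ p * M ^ (p - s)) * ENNReal.ofReal (2 ^ (p - s)) ^ k := by
          rw [mul_left_comm, mul_assoc, ← ENNReal.ofReal_mul (by positivity), hpow,
            ENNReal.ofReal_mul (by positivity), ENNReal.ofReal_pow (by positivity)]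
  have hgeom : (1 - ENNReal.ofReal (2 ^ (p - s)))⁻¹ = ENNReal.ofReal (1 / (1 - 2 ^ (p - s))) := by
    rw [← ENNReal.ofReal_one, ← ENNReal.ofReal_sub _ (by positivity),
      ENNReal.ofReal_div_of_pos (by linarith), ENNReal.ofReal_one, one_div]
  calc ∫⁻ x in S, ENNReal.ofReal (g x ^ (-s)) ∂μ
      ≤ ∫⁻ x in ⋃ k, shell k, ENNReal.ofReal (g x ^ (-s)) ∂μ := lintegral_mono_set hcover
    _ ≤ ∑' k, ∫⁻ x in shell k, ENNReal.ofReal (g x ^ (-s)) ∂μ := lintegral_iUnion_le _ _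
    _ ≤ ∑' k, K * ENNReal.ofReal (2 ^ p * M ^ (p - s)) * ENNReal.ofReal (2 ^ (p - s)) ^ k :=
        ENNReal.tsum_le_tsum hshell
    _ = K * ENNReal.ofReal (2 ^ p / (1 - 2 ^ (p - s)) * M ^ (p - s)) := by
        rw [ENNReal.tsum_mul_left, ENNReal.tsum_geometric, hgeom, mul_assoc,
          ← ENNReal.ofReal_mul (by positivity)]
        congr 2
        ring

end Dyadic

lemma abs_sqrt_one_sub_sq_sub_sqrt_one_sub_sq_le {u v : ℝ} (hu : |u| ≤ 1 / 2) (hv : |v| ≤ 1 / 2) :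
    |√(1 - u ^ 2) - √(1 - v ^ 2)| ≤ |u - v| := by
  set a := √(1 - u ^ 2)
  set b := √(1 - v ^ 2)
  have ha : a ^ 2 = 1 - u ^ 2 := Real.sq_sqrt (by nlinarith [sq_abs u, abs_nonneg u])
  have hb : b ^ 2 = 1 - v ^ 2 := Real.sq_sqrt (by nlinarith [sq_abs v, abs_nonneg v])
  have ha' : 1 / 2 ≤ a := Real.le_sqrt_of_sq_le (by nlinarith [sq_abs u, abs_nonneg u])
  have hb' : 1 / 2 ≤ b := Real.le_sqrt_of_sq_le (by nlinarith [sq_abs v, abs_nonneg v])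
  have hprod : |a - b| * (a + b) = |u - v| * |u + v| := by
    rw [← abs_of_pos (by linarith : 0 < a + b), ← abs_mul, ← abs_mul, ← abs_neg ((u - v) * _)]
    congr 1
    linear_combination ha - hb
  have huv : |u + v| ≤ 1 := (abs_add_le u v).trans (by linarith)
  nlinarith [abs_nonneg (a - b), abs_nonneg (u - v)]

section Sphere

variable {E F : Type*} [NormedAddCommGroup E] [InnerProductSpace ℝ E]

/-- Graph parametrization of the hemisphere around the unit vector `v` over the hyperplane
`j(F)`, which is meant to be `v^⊥`. -/
def hemisphereChart [SeminormedAddCommGroup F] [NormedSpace ℝ F] (j : F →ₗᵢ[ℝ] E) (v : E)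
    (y : F) : E :=
  j y + √(1 - ‖y‖ ^ 2) • v

lemma lipschitzOnWith_hemisphereChart [SeminormedAddCommGroup F] [NormedSpace ℝ F]
    (j : F →ₗᵢ[ℝ] E) {v : E} (hv : ‖v‖ = 1) :
    LipschitzOnWith 2 (hemisphereChart j v) (closedBall 0 (1 / 2)) := by
  refine LipschitzOnWith.of_dist_le_mul fun x hx z hz => ?_
  rw [mem_closedBall_zero_iff] at hx hz
  have hsqrt := abs_sqrt_one_sub_sq_sub_sqrt_one_sub_sq_le (u := ‖x‖) (v := ‖z‖)
    (by rwa [abs_norm]) (by rwa [abs_norm])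
  calc dist (hemisphereChart j v x) (hemisphereChart j v z)
      = ‖j (x - z) + (√(1 - ‖x‖ ^ 2) - √(1 - ‖z‖ ^ 2)) • v‖ := by
        rw [dist_eq_norm, hemisphereChart, hemisphereChart, map_sub, sub_smul]
        congr 1; abel
    _ ≤ ‖x - z‖ + |‖x‖ - ‖z‖| := by
        refine (norm_add_le _ _).trans ?_
        rw [j.norm_map, norm_smul, hv, mul_one, Real.norm_eq_abs]
        gcongr
    _ ≤ 2 * dist x z := by
        rw [dist_eq_norm]
        linarith [abs_norm_sub_norm_le x z]

lemma norm_sub_inner_smul_sq {v : E} (hv : ‖v‖ = 1) (ω : E) :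
    ‖ω - ⟪v, ω⟫_ℝ • v‖ ^ 2 = ‖ω‖ ^ 2 - ⟪v, ω⟫_ℝ ^ 2 := by
  rw [norm_sub_sq_real, norm_smul, real_inner_smul_right, real_inner_comm, Real.norm_eq_abs,
    mul_pow, sq_abs, hv]
  ring

lemma sphere_inter_closedBall_subset_image_hemisphereChart [NormedAddCommGroup F]
    [InnerProductSpace ℝ F] {j : F →ₗᵢ[ℝ] E} {v : E} (hv : ‖v‖ = 1)
    (hj : LinearMap.range j.toLinearMap = (ℝ ∙ v)ᗮ) {δ : ℝ} (hδ : δ ≤ 1 / 2) :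
    sphere 0 1 ∩ closedBall v δ ⊆ hemisphereChart j v '' closedBall 0 δ := by
  rintro ω ⟨hω, hωv⟩
  rw [mem_sphere_zero_iff_norm] at hω
  rw [mem_closedBall, dist_eq_norm] at hωv
  set t := ⟪v, ω⟫_ℝ
  have hdist : ‖ω - v‖ ^ 2 = 2 - 2 * t := by
    rw [norm_sub_sq_real, hω, hv, real_inner_comm]; ring
  have hy : ω - t • v ∈ LinearMap.range j.toLinearMap := by
    rw [hj, Submodule.mem_orthogonal_singleton_iff_inner_right, inner_sub_right,
      real_inner_smul_right, real_inner_self_eq_norm_sq, hv]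
    ring
  obtain ⟨y, hjy⟩ := hy
  replace hjy : j y = ω - t • v := hjy
  have hy2 : ‖y‖ ^ 2 = 1 - t ^ 2 := by
    rw [← j.norm_map, hjy, norm_sub_inner_smul_sq hv, hω]; ring
  have ht : 0 ≤ t := by nlinarith [norm_nonneg (ω - v)]
  have ht1 : t ≤ 1 := by nlinarith [sq_nonneg ‖y‖]
  refine ⟨y, ?_, ?_⟩
  · rw [mem_closedBall_zero_iff]
    refine pow_le_pow_iff_left₀ (norm_nonneg y) (hωv.trans' (norm_nonneg _)) two_ne_zero |>.1 ?_
    nlinarith [pow_le_pow_left₀ (norm_nonneg _) hωv 2]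
  · rw [hemisphereChart, hy2, sub_sub_cancel, Real.sqrt_sq ht, hjy]
    abel

lemma exists_linearIsometry_range_eq_orthogonal [FiniteDimensional ℝ E] {n : ℕ}
    (hE : finrank ℝ E = n + 1) {v : E} (hv : v ≠ 0) :
    ∃ j : EuclideanSpace ℝ (Fin n) →ₗᵢ[ℝ] E, LinearMap.range j.toLinearMap = (ℝ ∙ v)ᗮ := by
  have : Fact (finrank ℝ E = n + 1) := ⟨hE⟩
  have hH : finrank ℝ (ℝ ∙ v)ᗮ = n := Submodule.finrank_orthogonal_span_singleton hv
  let e := ((stdOrthonormalBasis ℝ (ℝ ∙ v)ᗮ).reindex (finCongr hH)).repr.symm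
  refine ⟨(ℝ ∙ v)ᗮ.subtypeₗᵢ.comp e.toLinearIsometry, ?_⟩
  ext x
  simp only [LinearMap.mem_range, LinearIsometry.coe_toLinearMap, LinearIsometry.coe_comp,
    Function.comp_apply, Submodule.coe_subtypeₗᵢ, LinearIsometryEquiv.coe_toLinearIsometry]
  exact ⟨fun ⟨y, hy⟩ => hy ▸ (e y).2, fun hx => ⟨e.symm ⟨x, hx⟩, by simp⟩⟩

end Sphere

section Measure

variable {E : Type*} [NormedAddCommGroup E] [InnerProductSpace ℝ E] [FiniteDimensional ℝ E]
  [MeasurableSpace E] [BorelSpace E] {n : ℕ}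

lemma hausdorffMeasure_sphere_inter_closedBall_le (hE : finrank ℝ E = n + 1) {v : E}
    (hv : ‖v‖ = 1) {δ : ℝ} (hδ0 : 0 ≤ δ) (hδ : δ ≤ 1 / 2) :
    μH[n] (sphere (0 : E) 1 ∩ closedBall v δ)
      ≤ ENNReal.ofReal ((2 * δ) ^ n) * μH[n] (closedBall (0 : EuclideanSpace ℝ (Fin n)) 1) := by
  obtain ⟨j, hj⟩ :=
    exists_linearIsometry_range_eq_orthogonal hE (norm_ne_zero_iff.1 (hv ▸ one_ne_zero))
  calc μH[n] (sphere (0 : E) 1 ∩ closedBall v δ)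
      ≤ μH[n] (hemisphereChart j v '' closedBall 0 δ) :=
        measure_mono (sphere_inter_closedBall_subset_image_hemisphereChart hv hj hδ)
    _ ≤ 2 ^ (n : ℝ) * μH[n] (closedBall (0 : EuclideanSpace ℝ (Fin n)) δ) :=
        ((lipschitzOnWith_hemisphereChart j hv).mono
          (closedBall_subset_closedBall hδ)).hausdorffMeasure_image_le n.cast_nonneg
    _ = _ := by
        rw [Measure.addHaar_closedBall' _ _ hδ0, finrank_euclideanSpace_fin, ← mul_assoc,
          ENNReal.rpow_natCast, mul_pow, ENNReal.ofReal_mul (by positivity),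
          ENNReal.ofReal_pow zero_le_two, ENNReal.ofReal_ofNat]

lemma hausdorffMeasure_sphere_lt_top (hE : finrank ℝ E = n + 1) :
    μH[n] (sphere (0 : E) 1) < ∞ := by
  obtain ⟨t, ht, htf, hcover⟩ :=
    (isCompact_sphere (0 : E) 1).finite_cover_balls (e := 1 / 2) (by norm_num)
  refine (measure_mono fun ω hω => ?_).trans_lt <| measure_biUnion_lt_top (μ := μH[n]) htf
    (f := fun v => sphere (0 : E) 1 ∩ closedBall v (1 / 2)) fun v hv => ?_
  · obtain ⟨v, hv, hωv⟩ := mem_iUnion₂.1 (hcover hω)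
    exact mem_iUnion₂.2 ⟨v, hv, hω, ball_subset_closedBall hωv⟩
  · exact (hausdorffMeasure_sphere_inter_closedBall_le hE (mem_sphere_zero_iff_norm.1 (ht hv))
      (by norm_num) le_rfl).trans_lt (ENNReal.mul_lt_top ENNReal.ofReal_lt_top
        measure_closedBall_lt_top)

lemma exists_hausdorffMeasure_sphere_inter_closedBall_le (hE : finrank ℝ E = n + 1) :
    ∃ C : ℝ≥0, ∀ (x : E) (δ : ℝ), 0 ≤ δ →
      μH[n] (sphere (0 : E) 1 ∩ closedBall x δ) ≤ ENNReal.ofReal (C * δ ^ n) := by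
  set B := μH[n] (closedBall (0 : EuclideanSpace ℝ (Fin n)) 1)
  set Sph := μH[n] (sphere (0 : E) 1)
  have hfin : B + Sph ≠ ∞ :=
    ENNReal.add_ne_top.2 ⟨measure_closedBall_lt_top.ne, (hausdorffMeasure_sphere_lt_top hE).ne⟩
  refine ⟨4 ^ n * (B + Sph).toNNReal, fun x δ hδ => ?_⟩
  suffices μH[n] (sphere 0 1 ∩ closedBall x δ) ≤ ENNReal.ofReal ((4 * δ) ^ n) * (B + Sph) by
    convert this using 1
    rw [mul_pow, NNReal.coe_mul, NNReal.coe_pow, NNReal.coe_ofNat, mul_right_comm,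
      ENNReal.ofReal_mul (by positivity), ENNReal.ofReal_coe_nnreal, ENNReal.coe_toNNReal hfin]
  rcases le_or_gt δ (1 / 4) with hδ4 | hδ4
  · rcases (sphere (0 : E) 1 ∩ closedBall x δ).eq_empty_or_nonempty with h | ⟨w, hw, hwx⟩
    · simp [h]
    calc μH[n] (sphere 0 1 ∩ closedBall x δ)
        ≤ μH[n] (sphere 0 1 ∩ closedBall w (2 * δ)) := by
          refine measure_mono (inter_subset_inter_right _ fun ω hω => ?_)
          rw [mem_closedBall] at hω hwx ⊢
          linarith [dist_triangle_right ω w x]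
      _ ≤ ENNReal.ofReal ((2 * (2 * δ)) ^ n) * B :=
          hausdorffMeasure_sphere_inter_closedBall_le hE (mem_sphere_zero_iff_norm.1 hw)
            (by positivity) (by linarith)
      _ ≤ ENNReal.ofReal ((4 * δ) ^ n) * (B + Sph) := by
          rw [← mul_assoc, show (2 : ℝ) * 2 = 4 by norm_num]
          gcongr
          exact le_self_add
  · calc μH[n] (sphere 0 1 ∩ closedBall x δ) ≤ Sph := measure_mono inter_subset_left
      _ ≤ ENNReal.ofReal ((4 * δ) ^ n) * (B + Sph) := by
          refine le_mul_of_one_le_of_le ?_ le_add_self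
          exact ENNReal.one_le_ofReal.2 (one_le_pow₀ (by linarith))

end Measure

section Integral

variable {E : Type*} [NormedAddCommGroup E] [InnerProductSpace ℝ E] [FiniteDimensional ℝ E]
  [MeasurableSpace E] [BorelSpace E] {n : ℕ}

lemma exists_hausdorffMeasure_sphere_inter_jb_lt_le (hE : finrank ℝ E = n + 1) :
    ∃ C : ℝ≥0, ∀ (A : E) (r t : ℝ), 0 < r →
      μH[n] (sphere (0 : E) 1 ∩ {ω | jb ‖A + r • ω‖ < t})
        ≤ ENNReal.ofReal (C * (t / jb r) ^ n) := by
  obtain ⟨C, hC⟩ := exists_hausdorffMeasure_sphere_inter_closedBall_le hE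
  set Sph := μH[n] (sphere (0 : E) 1)
  refine ⟨2 ^ n * (C + Sph.toNNReal), fun A r t hr => ?_⟩
  rcases le_or_gt t 1 with ht | ht
  · have hempty : {ω : E | jb ‖A + r • ω‖ < t} = ∅ :=
      eq_empty_of_forall_notMem fun ω hω => (one_le_jb _).not_gt (hω.trans_le ht)
    simp [hempty]
  have hjb : jb r ≤ 1 + r := (jb_le_one_add_abs r).trans_eq (by rw [abs_of_pos hr])
  rw [NNReal.coe_mul, NNReal.coe_pow, NNReal.coe_ofNat, mul_comm (2 ^ n : ℝ), mul_assoc,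
    ← mul_pow]
  rcases le_or_gt r 1 with hr1 | hr1
  · have h1 : 1 ≤ 2 * (t / jb r) := by
      rw [mul_div_assoc', le_div_iff₀ (jb_pos r)]
      linarith
    calc μH[n] (sphere 0 1 ∩ {ω | jb ‖A + r • ω‖ < t}) ≤ Sph := measure_mono inter_subset_left
      _ = ENNReal.ofReal (Sph.toNNReal : ℝ) := by
          rw [ENNReal.ofReal_coe_nnreal,
            ENNReal.coe_toNNReal (hausdorffMeasure_sphere_lt_top hE).ne]
      _ ≤ ENNReal.ofReal ((C + Sph.toNNReal : ℝ≥0) * (2 * (t / jb r)) ^ n) :=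
          ENNReal.ofReal_le_ofReal <| (NNReal.coe_le_coe.2 le_add_self).trans
            (le_mul_of_one_le_right (by positivity) (one_le_pow₀ h1))
  · have hsub : sphere (0 : E) 1 ∩ {ω | jb ‖A + r • ω‖ < t} ⊆
        sphere 0 1 ∩ closedBall (-r⁻¹ • A) (t / r) := by
      refine inter_subset_inter_right _ fun ω hω => ?_
      have hAω : ω - -r⁻¹ • A = r⁻¹ • (A + r • ω) := by
        rw [neg_smul, sub_neg_eq_add, smul_add, smul_smul, inv_mul_cancel₀ hr.ne', one_smul,
          add_comm]
      rw [mem_closedBall, dist_eq_norm, hAω, norm_smul, Real.norm_of_nonneg (by positivity),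
        inv_mul_eq_div]
      exact div_le_div_of_nonneg_right ((abs_le_jb _).trans' (le_abs_self _) |>.trans hω.le)
        hr.le
    calc μH[n] (sphere 0 1 ∩ {ω | jb ‖A + r • ω‖ < t})
        ≤ ENNReal.ofReal (C * (t / r) ^ n) := (measure_mono hsub).trans (hC _ _ (by positivity))
      _ ≤ ENNReal.ofReal ((C + Sph.toNNReal : ℝ≥0) * (2 * (t / jb r)) ^ n) := by
          refine ENNReal.ofReal_le_ofReal (mul_le_mul (by simp) ?_ (by positivity) (by positivity))
          refine pow_le_pow_left₀ (by positivity) ?_ n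
          rw [mul_div_assoc', div_le_div_iff₀ hr (jb_pos r)]
          nlinarith

theorem exists_setIntegral_sphere_jb_rpow_neg_le (hE : finrank ℝ E = n + 1) {s : ℝ}
    (hs : (n : ℝ) < s) :
    ∃ C > 0, ∀ (A : E) (r : ℝ), 0 < r →
      ∫ ω in sphere (0 : E) 1, jb ‖A + r • ω‖ ^ (-s) ∂μH[n]
        ≤ C * jb (‖A‖ - r) ^ ((n : ℝ) - s) * jb r ^ (-(n : ℝ)) := by
  obtain ⟨C, hC⟩ := exists_hausdorffMeasure_sphere_inter_jb_lt_le hE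
  set c : ℝ := 2 ^ (n : ℝ) / (1 - 2 ^ ((n : ℝ) - s))
  have hc : 0 < c := div_pos (by positivity)
    (sub_pos.2 (Real.rpow_lt_one_of_one_lt_of_neg one_lt_two (by linarith)))
  refine ⟨C * c + 1, by positivity, fun A r hr => ?_⟩
  set M := jb (‖A‖ - r)
  have hM : 0 < M := jb_pos _
  have hjbr : 0 < jb r := jb_pos r
  have hlint : ∫⁻ ω in sphere (0 : E) 1, ENNReal.ofReal (jb ‖A + r • ω‖ ^ (-s)) ∂μH[n]
      ≤ ENNReal.ofReal (C * jb r ^ (-(n : ℝ))) * ENNReal.ofReal (c * M ^ ((n : ℝ) - s)) := by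
    refine lintegral_rpow_neg_le_of_measure_lt_le isClosed_sphere.measurableSet
      (by fun_prop) hM (fun ω hω => jb_le_jb ?_) (n.cast_nonneg.trans hs.le) hs
      fun t ht => (hC A r t hr).trans_eq ?_
    · rw [abs_of_nonneg (norm_nonneg _)]
      simpa [norm_smul, abs_of_pos hr, mem_sphere_zero_iff_norm.1 hω]
        using abs_norm_sub_norm_le A (-(r • ω))
    · rw [← ENNReal.ofReal_mul (by positivity), div_pow, div_eq_mul_inv, ← Real.rpow_natCast,
        ← Real.rpow_natCast, ← Real.rpow_neg hjbr.le]
      ring_nf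
  have hbound : 0 ≤ C * c * M ^ ((n : ℝ) - s) * jb r ^ (-(n : ℝ)) := by positivity
  calc ∫ ω in sphere (0 : E) 1, jb ‖A + r • ω‖ ^ (-s) ∂μH[n]
      ≤ (∫⁻ ω in sphere (0 : E) 1, ENNReal.ofReal ‖jb ‖A + r • ω‖ ^ (-s)‖ ∂μH[n]).toReal :=
        (Real.le_norm_self _).trans (norm_integral_le_lintegral_norm _)
    _ ≤ C * c * M ^ ((n : ℝ) - s) * jb r ^ (-(n : ℝ)) := by
        refine ENNReal.toReal_le_of_le_ofReal hbound (hlint.trans_eq' ?_ |>.trans_eq ?_)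
        · simp_rw [Real.norm_of_nonneg (Real.rpow_nonneg (jb_pos _).le _)]
        · rw [← ENNReal.ofReal_mul (by positivity)]
          ring_nf
    _ ≤ (C * c + 1) * M ^ ((n : ℝ) - s) * jb r ^ (-(n : ℝ)) := by
        gcongr
        linarith

end Integral

/-- sphere integral estimate
∫_{S^{d-1}} ⟨A + rω⟩^{-s} dω ≲ ⟨|A| − r⟩^{d−1−s} ⟨r⟩^{1−d}, constant depending only on d, s. -/
theorem stmt_0 (d : ℕ) (hd : 2 ≤ d) (s : ℝ) (hs : (d : ℝ) - 1 < s) :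
    ∃ C > 0, ∀ (A : Rd d) (r : ℝ), 0 < r →
      (∫ ω in Metric.sphere (0 : Rd d) 1, jb ‖A + r • ω‖ ^ (-s) ∂μH[(d : ℝ) - 1])
        ≤ C * jb (‖A‖ - r) ^ ((d : ℝ) - 1 - s) * jb r ^ (1 - (d : ℝ)) := by
  obtain ⟨n, rfl⟩ : ∃ n, d = n + 1 := ⟨d - 1, by omega⟩
  have hn : ((n + 1 : ℕ) : ℝ) - 1 = n := by push_cast; ring
  rw [hn] at hs
  obtain ⟨C, hC, hbound⟩ := exists_setIntegral_sphere_jb_rpow_neg_le finrank_euclideanSpace_fin hs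
  refine ⟨C, hC, fun A r hr => ?_⟩
  rw [hn, show 1 - ((n + 1 : ℕ) : ℝ) = -n by push_cast; ring]
  exact hbound A r hr
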